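/- arXiv:1605.02848 — 2 statements merged into one kernel-verified Lean document; each statement's English description precedes it below -/
import Mathlib

section
/- CVaR is subadditive/convex as a functional: for integrable random variables X, Y and θ ∈ [0,1], CVaR_α(θX + (1-θ)Y) ≤ θ CVaR_α(X) + (1-θ) CVaR_α(Y). -/
open MeasureTheory ProbabilityTheory

/-! The Rockafellar–Uryasev objective `(X, u) ↦ u + (1 - α)⁻¹ E[(X - u)⁺]` is jointly convex,
because `t ↦ t⁺` is convex and nondecreasing. Evaluating it for `θX + (1 - θ)Y` at
`θu + (1 - θ)v` and taking infima over `u` and `v` gives the claim. The infimum defining CVaR is a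
genuine one (not the junk value `0` of an unbounded `⨅`): for `α ∈ [0, 1)` the objective is
bounded below by `E[X]`. -/

noncomputable def CVaR {Ω : Type*} [MeasureSpace Ω] (α : ℝ) (X : Ω → ℝ) : ℝ :=
  ⨅ u : ℝ, u + (1 - α)⁻¹ * ∫ ω, max (X ω - u) 0

lemma max_zero_convex_combination_le {θ : ℝ} (hθ₀ : 0 ≤ θ) (hθ₁ : θ ≤ 1) (a b : ℝ) :
    max (θ * a + (1 - θ) * b) 0 ≤ θ * max a 0 + (1 - θ) * max b 0 := by
  have ha : θ * a ≤ θ * max a 0 := mul_le_mul_of_nonneg_left (le_max_left a 0) hθ₀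
  have hb : (1 - θ) * b ≤ (1 - θ) * max b 0 :=
    mul_le_mul_of_nonneg_left (le_max_left b 0) (by linarith)
  exact max_le (by linarith) (by positivity)

namespace CVaR

variable {Ω : Type*} [MeasureSpace Ω]

noncomputable def objective (α : ℝ) (X : Ω → ℝ) (u : ℝ) : ℝ :=
  u + (1 - α)⁻¹ * ∫ ω, max (X ω - u) 0

lemma eq_iInf_objective (α : ℝ) (X : Ω → ℝ) : CVaR α X = ⨅ u, objective α X u := rfl

lemma integrable_max_sub_const_zero [IsFiniteMeasure (ℙ : Measure Ω)] {X : Ω → ℝ}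
    (hX : Integrable X) (u : ℝ) :
    Integrable fun ω => max (X ω - u) 0 :=
  (hX.sub (integrable_const u)).pos_part

lemma integral_sub_le_integral_max_sub_zero [IsProbabilityMeasure (ℙ : Measure Ω)]
    {X : Ω → ℝ} (hX : Integrable X) (u : ℝ) :
    (∫ ω, X ω) - u ≤ ∫ ω, max (X ω - u) 0 := by
  have h := integral_mono (f := fun ω => X ω - u) (hX.sub (integrable_const u))
    (integrable_max_sub_const_zero hX u) fun ω => le_max_left (X ω - u) 0
  rwa [integral_sub hX (integrable_const u), integral_const, probReal_univ, smul_eq_mul,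
    one_mul] at h

lemma integral_le_objective [IsProbabilityMeasure (ℙ : Measure Ω)] {α : ℝ} (hα₀ : 0 ≤ α)
    (hα₁ : α < 1) {X : Ω → ℝ} (hX : Integrable X) (u : ℝ) :
    ∫ ω, X ω ≤ objective α X u := by
  have hc : 1 ≤ (1 - α)⁻¹ := one_le_inv₀ (by linarith) |>.mpr (by linarith)
  have hlow := integral_sub_le_integral_max_sub_zero hX u
  have hpos : 0 ≤ ∫ ω, max (X ω - u) 0 := integral_nonneg fun ω => le_max_right _ _
  unfold objective
  nlinarith

lemma bddBelow_range_objective [IsProbabilityMeasure (ℙ : Measure Ω)] {α : ℝ} (hα₀ : 0 ≤ α)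
    (hα₁ : α < 1) {X : Ω → ℝ} (hX : Integrable X) :
    BddBelow (Set.range (objective α X)) :=
  ⟨∫ ω, X ω, Set.forall_mem_range.mpr (integral_le_objective hα₀ hα₁ hX)⟩

lemma objective_convex_combination_le [IsFiniteMeasure (ℙ : Measure Ω)] {α : ℝ} (hα₁ : α < 1)
    {θ : ℝ} (hθ₀ : 0 ≤ θ) (hθ₁ : θ ≤ 1) {X Y : Ω → ℝ} (hX : Integrable X) (hY : Integrable Y) (u v : ℝ) :
    objective α (fun ω => θ * X ω + (1 - θ) * Y ω) (θ * u + (1 - θ) * v) ≤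
      θ * objective α X u + (1 - θ) * objective α Y v := by
  have hintX := (integrable_max_sub_const_zero hX u).const_mul θ
  have hintY := (integrable_max_sub_const_zero hY v).const_mul (1 - θ)
  have hintegral : ∫ ω, max (θ * X ω + (1 - θ) * Y ω - (θ * u + (1 - θ) * v)) 0 ≤
      ∫ ω, (θ * max (X ω - u) 0 + (1 - θ) * max (Y ω - v) 0) := by
    refine integral_mono (integrable_max_sub_const_zero
      ((hX.const_mul θ).add (hY.const_mul (1 - θ))) _) (hintX.add hintY) fun ω => ?_
    rw [show θ * X ω + (1 - θ) * Y ω - (θ * u + (1 - θ) * v) =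
      θ * (X ω - u) + (1 - θ) * (Y ω - v) by ring]
    exact max_zero_convex_combination_le hθ₀ hθ₁ (X ω - u) (Y ω - v)
  have hc : 0 ≤ (1 - α)⁻¹ := inv_nonneg.mpr (by linarith)
  calc objective α (fun ω => θ * X ω + (1 - θ) * Y ω) (θ * u + (1 - θ) * v)
      ≤ θ * u + (1 - θ) * v +
          (1 - α)⁻¹ * ∫ ω, (θ * max (X ω - u) 0 + (1 - θ) * max (Y ω - v) 0) := by
        unfold objective; gcongr
    _ = θ * objective α X u + (1 - θ) * objective α Y v := by
        rw [integral_add hintX hintY, integral_const_mul, integral_const_mul]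
        unfold objective; ring

end CVaR

/-- CVaR is convex as a functional on random variables. -/
theorem cvar_convex
    {Ω : Type*} [MeasureSpace Ω] [IsProbabilityMeasure (ℙ : Measure Ω)]
    (X Y : Ω → ℝ) (hX : Integrable X) (hY : Integrable Y)
    (θ : ℝ) (hθ : θ ∈ Set.Icc (0 : ℝ) 1)
    (α : ℝ) (hα : α ∈ Set.Ioo (0 : ℝ) 1) :
    CVaR α (fun ω => θ * X ω + (1 - θ) * Y ω) ≤ θ * CVaR α X + (1 - θ) * CVaR α Y := by
  obtain ⟨hθ₀, hθ₁⟩ := hθ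
  obtain ⟨hα₀, hα₁⟩ := hα
  have hbdd := CVaR.bddBelow_range_objective hα₀.le hα₁
    ((hX.const_mul θ).add (hY.const_mul (1 - θ)))
  simp only [CVaR.eq_iInf_objective]
  rw [Real.mul_iInf_of_nonneg hθ₀, Real.mul_iInf_of_nonneg (sub_nonneg.mpr hθ₁)]
  exact le_ciInf_add_ciInf fun u v =>
    (ciInf_le hbdd _).trans (CVaR.objective_convex_combination_le hα₁ hθ₀ hθ₁ hX hY u v)
end

section
/- Conditional tail expectation of a nonincreasing transform: let ψ be a real random variable with continuous strictly increasing CDF, h : ℝ → ℝ nonincreasing and integrable against the law of ψ. Then the map α ↦ E[h(ψ) | ψ ≥ VaR_α(ψ)] is nonincreasing, and E[h(ψ) | ψ ≥ VaR_α(ψ)] ≤ E[h(ψ)] for all α ∈ (0,1). -/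
/-! Since `h` is nonincreasing, `h ∘ ψ` is at most `h v'` on the tail `{v' ≤ ψ}` and at least
`h v'` on the slab `{v ≤ ψ < v'}`, so enlarging the tail by the slab cannot lower its average:
tail averages decrease as the cut point grows, and the whole space (giving the mean) is the
extreme case. The cut point `VaR α ψ` is the upper `α`-quantile of the law of `ψ`; it is
nondecreasing in `α`, and the left limit of the CDF at it is at most `α`, so its tail has
probability at least `1 - α > 0`. -/

open MeasureTheory ProbabilityTheory

noncomputable def VaR {Ω : Type*} [MeasureSpace Ω] (α : ℝ) (ψ : Ω → ℝ) : ℝ :=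
  sInf {u : ℝ | α < (ℙ {ω | ψ ω ≤ u}).toReal}

noncomputable def tailCondExp {Ω : Type*} [MeasureSpace Ω]
    (α : ℝ) (ψ : Ω → ℝ) (h : ℝ → ℝ) : ℝ :=
  (∫ ω in {ω | VaR α ψ ≤ ψ ω}, h (ψ ω)) / (ℙ {ω | VaR α ψ ≤ ψ ω}).toReal

open Set Filter

section SetAverage

variable {α : Type*} [MeasurableSpace α] {μ : Measure α} [IsFiniteMeasure μ]
  {f : α → ℝ} {s t : Set α} {c : ℝ}

theorem setIntegral_div_measureReal_le_of_subset (hst : s ⊆ t) (hs : MeasurableSet s)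
    (ht : MeasurableSet t) (hf : IntegrableOn f t μ) (hμs : 0 < μ.real s)
    (hfs : ∀ x ∈ s, f x ≤ c) (hft : ∀ x ∈ t \ s, c ≤ f x) :
    (∫ x in s, f x ∂μ) / μ.real s ≤ (∫ x in t, f x ∂μ) / μ.real t := by
  have hdisj : Disjoint (t \ s) s := disjoint_sdiff_left
  have hint_s : ∫ x in s, f x ∂μ ≤ c * μ.real s := by
    simpa [setIntegral_const, mul_comm] using
      setIntegral_mono_on (hf.mono_set hst) (integrableOn_const (measure_ne_top _ _)) hs hfs
  have hint_diff : c * μ.real (t \ s) ≤ ∫ x in t \ s, f x ∂μ :=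
    setIntegral_ge_of_const_le_real (ht.diff hs) (measure_ne_top _ _) hft
      (hf.mono_set sdiff_subset)
  rw [← sdiff_union_of_subset hst,
    setIntegral_union hdisj hs (hf.mono_set sdiff_subset) (hf.mono_set hst),
    measureReal_union hdisj hs, div_le_div_iff₀ hμs (by positivity)]
  nlinarith [measureReal_nonneg (μ := μ) (s := t \ s)]

end SetAverage

namespace MeasureTheory.Measure

variable (μ : Measure ℝ) {α α' : ℝ}

noncomputable def upperQuantile (α : ℝ) : ℝ :=
  sInf {u | α < cdf μ u}

theorem bddBelow_setOf_lt_cdf (hα : 0 < α) : BddBelow {u | α < cdf μ u} := by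
  obtain ⟨u₀, hu₀⟩ := ((tendsto_cdf_atBot μ).eventually_lt_const hα).exists
  refine ⟨u₀, fun u (hu : α < cdf μ u) => ?_⟩
  by_contra! hlt
  exact (monotone_cdf μ hlt.le).not_gt (hu₀.trans hu)

theorem nonempty_setOf_lt_cdf (hα : α < 1) : {u | α < cdf μ u}.Nonempty :=
  ((tendsto_cdf_atTop μ).eventually_const_lt hα).exists

theorem upperQuantile_mono (hα : 0 < α) (hα' : α' < 1) (hle : α ≤ α') :
    μ.upperQuantile α ≤ μ.upperQuantile α' :=
  csInf_le_csInf (μ.bddBelow_setOf_lt_cdf hα) (μ.nonempty_setOf_lt_cdf hα')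
    fun _ hu => hle.trans_lt hu

theorem cdf_le_of_lt_upperQuantile (hα : 0 < α) {u : ℝ} (hu : u < μ.upperQuantile α) :
    cdf μ u ≤ α :=
  le_of_not_gt fun h => notMem_of_lt_csInf hu (μ.bddBelow_setOf_lt_cdf hα) h

theorem one_sub_le_measureReal_Ici_upperQuantile [IsProbabilityMeasure μ] (hα : 0 < α) :
    1 - α ≤ μ.real (Ici (μ.upperQuantile α)) := by
  set q := μ.upperQuantile α
  have hleft : Function.leftLim (cdf μ) q ≤ α :=
    le_of_tendsto ((monotone_cdf μ).tendsto_leftLim q)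
      (eventually_nhdsWithin_of_forall fun _ hu => μ.cdf_le_of_lt_upperQuantile hα hu)
  have hIci : μ.real (Ici q) = 1 - Function.leftLim (cdf μ) q := by
    have h := (cdf μ).measure_Ici (tendsto_cdf_atTop μ) q
    rw [measure_cdf] at h
    rw [Measure.real, h, ENNReal.toReal_ofReal]
    linarith [(monotone_cdf μ).leftLim_le (le_refl q), cdf_le_one μ q]
  linarith

end MeasureTheory.Measure

section TailAverage

variable {Ω : Type*} [MeasurableSpace Ω] (μ : Measure Ω) (ψ : Ω → ℝ) (h : ℝ → ℝ)

noncomputable def tailAverage (v : ℝ) : ℝ :=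
  (∫ ω in {ω | v ≤ ψ ω}, h (ψ ω) ∂μ) / μ.real {ω | v ≤ ψ ω}

variable [IsFiniteMeasure μ] {μ ψ h}

theorem tailAverage_le_tailAverage (hψ : Measurable ψ) (hh : Antitone h)
    (hint : Integrable (fun ω => h (ψ ω)) μ) {v v' : ℝ} (hvv' : v ≤ v')
    (hpos : 0 < μ.real {ω | v' ≤ ψ ω}) :
    tailAverage μ ψ h v' ≤ tailAverage μ ψ h v :=
  setIntegral_div_measureReal_le_of_subset (fun _ hω => hvv'.trans hω)
    (hψ measurableSet_Ici) (hψ measurableSet_Ici) hint.integrableOn hpos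
    (fun _ hω => hh hω) fun _ hω => hh (not_le.mp hω.2).le

theorem tailAverage_le_integral [IsProbabilityMeasure μ] (hψ : Measurable ψ) (hh : Antitone h)
    (hint : Integrable (fun ω => h (ψ ω)) μ) {v : ℝ} (hpos : 0 < μ.real {ω | v ≤ ψ ω}) :
    tailAverage μ ψ h v ≤ ∫ ω, h (ψ ω) ∂μ :=
  calc tailAverage μ ψ h v ≤ (∫ ω in univ, h (ψ ω) ∂μ) / μ.real univ :=
        setIntegral_div_measureReal_le_of_subset (subset_univ _) (hψ measurableSet_Ici)
          MeasurableSet.univ hint.integrableOn hpos (fun _ hω => hh hω)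
          fun _ hω => hh (not_le.mp hω.2).le
    _ = ∫ ω, h (ψ ω) ∂μ := by rw [setIntegral_univ, probReal_univ, div_one]

end TailAverage

section VaR

variable {Ω : Type*} [MeasureSpace Ω] {ψ : Ω → ℝ} {α α' : ℝ}

theorem tailCondExp_eq_tailAverage (h : ℝ → ℝ) :
    tailCondExp α ψ h = tailAverage ℙ ψ h (VaR α ψ) := rfl

variable [IsProbabilityMeasure (ℙ : Measure Ω)]

theorem cdf_map_apply (hψ : Measurable ψ) (u : ℝ) :
    cdf (Measure.map ψ ℙ) u = (ℙ {ω | ψ ω ≤ u}).toReal := by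
  have := Measure.isProbabilityMeasure_map (μ := ℙ) hψ.aemeasurable
  rw [cdf_eq_real, map_measureReal_apply hψ measurableSet_Iic]
  rfl

theorem VaR_eq_upperQuantile (hψ : Measurable ψ) :
    VaR α ψ = (Measure.map ψ ℙ).upperQuantile α := by
  simp only [VaR, Measure.upperQuantile, cdf_map_apply hψ]

theorem VaR_mono (hψ : Measurable ψ) (hα : 0 < α) (hα' : α' < 1) (hle : α ≤ α') :
    VaR α ψ ≤ VaR α' ψ := by
  simpa only [VaR_eq_upperQuantile hψ] using (Measure.map ψ ℙ).upperQuantile_mono hα hα' hle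

theorem one_sub_le_measure_VaR_le (hψ : Measurable ψ) (hα : 0 < α) :
    1 - α ≤ (ℙ {ω | VaR α ψ ≤ ψ ω}).toReal := by
  have := Measure.isProbabilityMeasure_map (μ := ℙ) hψ.aemeasurable
  have := (Measure.map ψ ℙ).one_sub_le_measureReal_Ici_upperQuantile hα
  rwa [map_measureReal_apply hψ measurableSet_Ici, ← VaR_eq_upperQuantile hψ] at this

end VaR

theorem tail_condexp_antitone_and_le_mean_general
    {Ω : Type*} [MeasureSpace Ω] [IsProbabilityMeasure (ℙ : Measure Ω)]
    (ψ : Ω → ℝ) (hψ : Measurable ψ)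
    (h : ℝ → ℝ) (hh : Antitone h)
    (hint : Integrable fun ω => h (ψ ω)) :
    (∀ α α' : ℝ, α ∈ Set.Ioo (0 : ℝ) 1 → α' ∈ Set.Ioo (0 : ℝ) 1 → α ≤ α' →
      tailCondExp α' ψ h ≤ tailCondExp α ψ h) ∧
    (∀ α : ℝ, α ∈ Set.Ioo (0 : ℝ) 1 → tailCondExp α ψ h ≤ ∫ ω, h (ψ ω)) := by
  have htail_pos : ∀ α ∈ Ioo (0 : ℝ) 1, 0 < (ℙ {ω | VaR α ψ ≤ ψ ω}).toReal := fun α hα => by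
    linarith [one_sub_le_measure_VaR_le hψ hα.1, hα.2]
  simp only [tailCondExp_eq_tailAverage]
  refine ⟨fun α α' hα hα' hle => ?_, fun α hα => ?_⟩
  · exact tailAverage_le_tailAverage hψ hh hint (VaR_mono hψ hα.1 hα'.2 hle) (htail_pos α' hα')
  · exact tailAverage_le_integral hψ hh hint (htail_pos α hα)

/-- For a nonincreasing transform h, the conditional tail expectation
    E[h(ψ) | ψ ≥ VaR_α(ψ)] is nonincreasing in α and bounded above by E[h(ψ)]. -/
theorem tail_condexp_antitone_and_le_mean
    {Ω : Type*} [MeasureSpace Ω] [IsProbabilityMeasure (ℙ : Measure Ω)]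
    (ψ : Ω → ℝ) (hψ : Measurable ψ)
    (hcdf_cont : Continuous fun u : ℝ => (ℙ {ω | ψ ω ≤ u}).toReal)
    (hcdf_sm : StrictMono fun u : ℝ => (ℙ {ω | ψ ω ≤ u}).toReal)
    (h : ℝ → ℝ) (hh : Antitone h)
    (hint : Integrable fun ω => h (ψ ω)) :
    (∀ α α' : ℝ, α ∈ Set.Ioo (0 : ℝ) 1 → α' ∈ Set.Ioo (0 : ℝ) 1 → α ≤ α' →
      tailCondExp α' ψ h ≤ tailCondExp α ψ h) ∧
    (∀ α : ℝ, α ∈ Set.Ioo (0 : ℝ) 1 → tailCondExp α ψ h ≤ ∫ ω, h (ψ ω)) :=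
  tail_condexp_antitone_and_le_mean_general ψ hψ h hh hint
end
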